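/- (Corollary 4.2 of the paper: convergence of block Frontal Slice Descent, matrix form.) In the blocked FSD setup with block size s and m = n/s ≥ 2 blocks, define κ(s) = max_{0≤i≤m−1} ‖I_K − α·N_iᵀN_i‖₂ and μ(s) = max_{0≤i,j≤m−1, i≠j} ‖N_iᵀN_j‖₂. If the learning rate α satisfies κ(s) + α·μ(s)·(m−1) < 1, then lim_{t→∞} ‖X(t) − X*‖_F = 0. -/

import Mathlib

open Matrix Finset Filter

noncomputable def frobNorm {m k : ℕ} (A : Matrix (Fin m) (Fin k) ℝ) : ℝ :=
  Real.sqrt (∑ i, ∑ j, (A i j) ^ 2)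

noncomputable def specNorm {m k : ℕ} (A : Matrix (Fin m) (Fin k) ℝ) : ℝ :=
  ‖LinearMap.toContinuousLinearMap (Matrix.toEuclideanLin A)‖

def idx (n : ℕ) (hn : 0 < n) (a : ℤ) : Fin n :=
  ⟨(a % (n : ℤ)).toNat, by
    have h1 : (0 : ℤ) < (n : ℤ) := by exact_mod_cast hn
    have h2 := Int.emod_nonneg a h1.ne'
    have h3 := Int.emod_lt_of_pos a h1
    omega⟩

noncomputable def kappaFSD {n N K : ℕ} (hn : 0 < n) (α : ℝ)
    (M : Fin n → Matrix (Fin N) (Fin K) ℝ) : ℝ :=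
  Finset.univ.sup' (Finset.univ_nonempty_iff.mpr ⟨⟨0, hn⟩⟩)
    fun i => specNorm ((1 : Matrix (Fin K) (Fin K) ℝ) - α • ((M i)ᵀ * M i))

noncomputable def muFSD {n N K : ℕ} (hn : 2 ≤ n)
    (M : Fin n → Matrix (Fin N) (Fin K) ℝ) : ℝ :=
  ((Finset.univ : Finset (Fin n × Fin n)).filter fun p => p.1 ≠ p.2).sup'
    ⟨(⟨0, by omega⟩, ⟨1, by omega⟩), by
      refine Finset.mem_filter.mpr ⟨Finset.mem_univ _, ?_⟩
      simp [Fin.ext_iff]⟩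
    fun p => specNorm ((M p.1)ᵀ * M p.2)

/-!
Write `E t = X t - X*` and `N_t` for the block used at step `t`. Since the blocks
`N_{(t - i) mod m}`, `i < m`, are all the blocks once each, `B = ∑ᵢ N_{t-i} X*` and hence
`E (t+1) = (I - α N_tᵀ N_t) E t - α ∑_{i ≠ 0} N_tᵀ N_{t-i} E (t-i)`.
With `‖A E‖_F ≤ ‖A‖₂ ‖E‖_F` this gives `‖E (t+1)‖ ≤ ρ · max_{i<m} ‖E (t-i)‖` for
`ρ = κ + α μ (m-1) < 1`, so the errors in every window of `m` steps are a factor `ρ` smaller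
than those in the previous window, and `‖E t‖ = O(ρ^(t/m))`.
-/

open scoped Fin.IntCast Fin.CommRing

attribute [local instance] Matrix.frobeniusNormedAddCommGroup Matrix.frobeniusNormedSpace

lemma frobNorm_eq_norm {m k : ℕ} (A : Matrix (Fin m) (Fin k) ℝ) : frobNorm A = ‖A‖ := by
  rw [frobNorm, frobenius_norm_def, Real.sqrt_eq_rpow]
  simp_rw [Real.norm_eq_abs, Real.rpow_two, sq_abs]

lemma norm_mul_le_specNorm_mul {a b c : ℕ} (A : Matrix (Fin a) (Fin b) ℝ)
    (B : Matrix (Fin b) (Fin c) ℝ) : ‖A * B‖ ≤ specNorm A * ‖B‖ := by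
  rw [← frobenius_norm_transpose, ← frobenius_norm_transpose B, transpose_mul]
  -- the rows of `(A * B)ᵀ` are the images under `A` of the columns of `B`
  have hrow : ∀ j,
      ‖WithLp.toLp 2 ((Bᵀ * Aᵀ) j)‖ ≤ specNorm A * ‖WithLp.toLp 2 (Bᵀ j)‖ := by
    intro j
    have hcol : WithLp.toLp 2 ((Bᵀ * Aᵀ) j) = toEuclideanLin A (WithLp.toLp 2 (Bᵀ j)) := by
      ext i
      simp [mul_apply, mulVec, dotProduct, mul_comm]
    rw [hcol]
    exact (LinearMap.toContinuousLinearMap (toEuclideanLin A)).le_opNorm _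
  change ‖WithLp.toLp 2 fun j => WithLp.toLp 2 ((Bᵀ * Aᵀ) j)‖
    ≤ specNorm A * ‖WithLp.toLp 2 fun j => WithLp.toLp 2 (Bᵀ j)‖
  refine le_of_pow_le_pow_left₀ two_ne_zero (mul_nonneg (norm_nonneg _) (norm_nonneg _)) ?_
  rw [mul_pow, PiLp.norm_sq_eq_of_L2, PiLp.norm_sq_eq_of_L2, mul_sum]
  simp_rw [← mul_pow]
  gcongr with j
  exact hrow j

lemma idx_sub_injective {m : ℕ} (hm : 0 < m) (t : ℤ) :
    Function.Injective fun i : Fin m => idx m hm (t - ((i : ℕ) : ℤ)) := by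
  have : NeZero m := ⟨hm.ne'⟩
  have hcast : ∀ a : ℤ, idx m hm a = (a : Fin m) := fun a => Fin.ext (by simp [idx])
  intro i j hij
  simpa [hcast] using hij

lemma sum_idx_sub {β : Type*} [AddCommMonoid β] {m : ℕ} (hm : 0 < m) (t : ℤ)
    (f : Fin m → β) :
    ∑ i : Fin m, f (idx m hm (t - ((i : ℕ) : ℤ))) = ∑ i, f i :=
  Fintype.sum_bijective _ (idx_sub_injective hm t).bijective_of_finite _ _ fun _ => rfl

lemma norm_sub_smul_sum_mul_le {ι : Type*} [Fintype ι] [DecidableEq ι] {k p : ℕ}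
    (G : ι → Matrix (Fin k) (Fin k) ℝ) (E : ι → Matrix (Fin k) (Fin p) ℝ) (i₀ : ι)
    {α κ μ c : ℝ} (hα : 0 ≤ α) (hκ : specNorm (1 - α • G i₀) ≤ κ)
    (hμ : ∀ i ≠ i₀, specNorm (G i) ≤ μ) (hE : ∀ i, ‖E i‖ ≤ c) :
    ‖E i₀ - α • ∑ i, G i * E i‖ ≤ (κ + α * μ * (Fintype.card ι - 1)) * c := by
  have hsplit : E i₀ - α • ∑ i, G i * E i
      = (1 - α • G i₀) * E i₀ - ∑ i ∈ univ.erase i₀, α • (G i * E i) := by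
    rw [← add_sum_erase _ _ (mem_univ i₀), smul_add, smul_sum, Matrix.sub_mul, Matrix.one_mul,
      Matrix.smul_mul]
    abel
  have hdiag : ‖(1 - α • G i₀) * E i₀‖ ≤ κ * c :=
    (norm_mul_le_specNorm_mul _ _).trans
      (mul_le_mul hκ (hE i₀) (norm_nonneg _) ((norm_nonneg _).trans hκ))
  have hoff : ∀ i ∈ univ.erase i₀, ‖α • (G i * E i)‖ ≤ α * μ * c := by
    intro i hi
    have hGi := hμ i (ne_of_mem_erase hi)
    rw [norm_smul, Real.norm_of_nonneg hα, mul_assoc]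
    exact mul_le_mul_of_nonneg_left ((norm_mul_le_specNorm_mul _ _).trans
      (mul_le_mul hGi (hE i) (norm_nonneg _) ((norm_nonneg _).trans hGi))) hα
  have hcard : ((univ.erase i₀).card : ℝ) = Fintype.card ι - 1 := by
    rw [card_erase_of_mem (mem_univ _), card_univ,
      Nat.cast_pred (Fintype.card_pos_iff.mpr ⟨i₀⟩)]
  calc ‖E i₀ - α • ∑ i, G i * E i‖
      ≤ ‖(1 - α • G i₀) * E i₀‖ + ∑ i ∈ univ.erase i₀, ‖α • (G i * E i)‖ :=
        hsplit ▸ (norm_sub_le _ _).trans (add_le_add_right (norm_sum_le _ _) _)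
    _ ≤ κ * c + (univ.erase i₀).card * (α * μ * c) := by
        refine add_le_add hdiag ((sum_le_sum hoff).trans_eq ?_)
        rw [sum_const, nsmul_eq_mul]
    _ = (κ + α * μ * (Fintype.card ι - 1)) * c := by rw [hcard]; ring

lemma tendsto_zero_of_le_mul_window {m : ℕ} (hm : 0 < m) {ρ : ℝ} (hρ0 : 0 ≤ ρ) (hρ1 : ρ < 1)
    {e : ℤ → ℝ} (he : ∀ t, 0 ≤ e t)
    (hstep : ∀ t : ℤ, 0 ≤ t → ∀ c,
      (∀ i : Fin m, e (t - ((i : ℕ) : ℤ)) ≤ c) → e (t + 1) ≤ ρ * c) :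
    Tendsto (fun n : ℕ => e n) atTop (nhds 0) := by
  obtain ⟨C, hC⟩ : ∃ C, ∀ i : Fin m, e (-((i : ℕ) : ℤ)) ≤ C :=
    ⟨univ.sup' (univ_nonempty_iff.mpr ⟨⟨0, hm⟩⟩) fun i : Fin m => e (-((i : ℕ) : ℤ)),
      fun i => le_sup' (fun i : Fin m => e (-((i : ℕ) : ℤ))) (mem_univ i)⟩
  have hC0 : 0 ≤ C := (he _).trans (hC ⟨0, hm⟩)
  have hdecay : ∀ n : ℕ, e (n + 1 - m) ≤ C * ρ ^ (n / m) := by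
    intro n
    induction n using Nat.strong_induction_on with
    | _ n ih =>
    rcases lt_or_ge n m with hn | hn
    · rw [Nat.div_eq_of_lt hn, pow_zero, mul_one]
      convert hC ⟨m - 1 - n, by omega⟩ using 2
      push_cast [Nat.cast_sub (show 1 ≤ m by omega), Nat.cast_sub (show n ≤ m - 1 by omega)]
      ring
    · have hwindow :
          ∀ i : Fin m, e ((n - m : ℕ) - ((i : ℕ) : ℤ)) ≤ C * ρ ^ ((n - m) / m) := by
        intro i
        have hi := ih (n - 1 - i) (by omega)
        rw [show ((n - 1 - i : ℕ) : ℤ) + 1 - m = (n - m : ℕ) - ((i : ℕ) : ℤ) by omega] at hi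
        exact hi.trans (mul_le_mul_of_nonneg_left
          (pow_le_pow_of_le_one hρ0 hρ1.le (Nat.div_le_div_right (by omega))) hC0)
      rw [show (n : ℤ) + 1 - m = (n - m : ℕ) + 1 by omega, Nat.div_eq_sub_div hm hn, pow_succ]
      linarith [hstep _ (Int.natCast_nonneg _) _ hwindow]
  have hbound : ∀ n : ℕ, e n ≤ C * ρ ^ (n / m) := fun n => by
    have h := hdecay (n + m - 1)
    rw [show ((n + m - 1 : ℕ) : ℤ) + 1 - m = n by omega] at h
    exact h.trans (mul_le_mul_of_nonneg_left
      (pow_le_pow_of_le_one hρ0 hρ1.le (Nat.div_le_div_right (by omega))) hC0)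
  have hgeom : Tendsto (fun n : ℕ => C * ρ ^ (n / m)) atTop (nhds 0) := by
    simpa using ((tendsto_pow_atTop_nhds_zero_of_lt_one hρ0 hρ1).comp
      (Nat.tendsto_div_const_atTop hm.ne')).const_mul C
  exact squeeze_zero (fun n => he n) hbound hgeom

lemma specNorm_le_kappaFSD {n N K : ℕ} (hn : 0 < n) (α : ℝ)
    (M : Fin n → Matrix (Fin N) (Fin K) ℝ) (i : Fin n) :
    specNorm (1 - α • ((M i)ᵀ * M i)) ≤ kappaFSD hn α M :=
  le_sup' (fun i => specNorm (1 - α • ((M i)ᵀ * M i))) (mem_univ i)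

lemma specNorm_le_muFSD {n N K : ℕ} (hn : 2 ≤ n) (M : Fin n → Matrix (Fin N) (Fin K) ℝ)
    {i j : Fin n} (hij : i ≠ j) : specNorm ((M i)ᵀ * M j) ≤ muFSD hn M := by
  unfold muFSD
  exact le_sup' (fun p : Fin n × Fin n => specNorm ((M p.1)ᵀ * M p.2))
    (mem_filter.mpr ⟨mem_univ (i, j), hij⟩)

section BlockFSD

variable {m N K P : ℕ} {α : ℝ} {Nblk : Fin m → Matrix (Fin N) (Fin K) ℝ}
  {Xstar : Matrix (Fin K) (Fin P) ℝ} {B : Matrix (Fin N) (Fin P) ℝ}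
  {X : ℤ → Matrix (Fin K) (Fin P) ℝ} {R : ℤ → Matrix (Fin N) (Fin P) ℝ}

lemma fsd_error_succ (hm : 0 < m) (hB : B = (∑ i, Nblk i) * Xstar)
    (hR : ∀ t : ℤ, 0 ≤ t → R (t + 1) =
      B - ∑ i : Fin m, Nblk (idx m hm (t - ((i : ℕ) : ℤ))) * X (t - ((i : ℕ) : ℤ)))
    (hXstep : ∀ t : ℤ, 0 ≤ t → X (t + 1) = X t + α • ((Nblk (idx m hm t))ᵀ * R (t + 1)))
    {t : ℤ} (ht : 0 ≤ t) :
    X (t + 1) - Xstar = (X t - Xstar) - α • ∑ i : Fin m,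
      ((Nblk (idx m hm t))ᵀ * Nblk (idx m hm (t - ((i : ℕ) : ℤ)))) *
        (X (t - ((i : ℕ) : ℤ)) - Xstar) := by
  have hres : R (t + 1) = -∑ i : Fin m,
      Nblk (idx m hm (t - ((i : ℕ) : ℤ))) * (X (t - ((i : ℕ) : ℤ)) - Xstar) := by
    rw [hR t ht, hB, ← sum_idx_sub hm t Nblk, Matrix.sum_mul, ← sum_sub_distrib,
      ← sum_neg_distrib]
    simp only [Matrix.mul_sub, neg_sub]
  rw [hXstep t ht, hres, Matrix.mul_neg, Matrix.mul_sum]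
  simp only [Matrix.mul_assoc, smul_neg]
  abel

lemma fsd_error_le_window (hm : 2 ≤ m) (hα : 0 ≤ α) (hB : B = (∑ i, Nblk i) * Xstar)
    (hR : ∀ t : ℤ, 0 ≤ t → R (t + 1) =
      B - ∑ i : Fin m, Nblk (idx m (by omega) (t - ((i : ℕ) : ℤ))) * X (t - ((i : ℕ) : ℤ)))
    (hXstep : ∀ t : ℤ, 0 ≤ t →
      X (t + 1) = X t + α • ((Nblk (idx m (by omega) t))ᵀ * R (t + 1)))
    {t : ℤ} (ht : 0 ≤ t) {c : ℝ} (hc : ∀ i : Fin m, ‖X (t - ((i : ℕ) : ℤ)) - Xstar‖ ≤ c) :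
    ‖X (t + 1) - Xstar‖
      ≤ (kappaFSD (by omega) α Nblk + α * muFSD hm Nblk * ((m : ℝ) - 1)) * c := by
  have hm0 : 0 < m := by omega
  set T := idx m hm0 t
  have hdiag : specNorm (1 - α • ((Nblk T)ᵀ * Nblk (idx m hm0 (t - ((0 : ℕ) : ℤ)))))
      ≤ kappaFSD hm0 α Nblk := by
    simpa using specNorm_le_kappaFSD hm0 α Nblk T
  have hoff : ∀ i : Fin m, i ≠ ⟨0, hm0⟩ →
      specNorm ((Nblk T)ᵀ * Nblk (idx m hm0 (t - ((i : ℕ) : ℤ)))) ≤ muFSD hm Nblk := by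
    intro i hi
    refine specNorm_le_muFSD hm Nblk fun h => hi (idx_sub_injective hm0 t ?_)
    simpa [T] using h.symm
  have h := norm_sub_smul_sum_mul_le
    (fun i : Fin m => (Nblk T)ᵀ * Nblk (idx m hm0 (t - ((i : ℕ) : ℤ))))
    (fun i : Fin m => X (t - ((i : ℕ) : ℤ)) - Xstar) ⟨0, hm0⟩ hα hdiag hoff hc
  rw [fsd_error_succ hm0 hB hR hXstep ht]
  simpa using h

end BlockFSD

theorem block_fsd_convergence
    {s m N K P : ℕ} (hm : 2 ≤ m)
    (M : Fin (m * s) → Matrix (Fin N) (Fin K) ℝ)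
    (Xstar : Matrix (Fin K) (Fin P) ℝ)
    (α : ℝ) (hα : 0 < α)
    (Nblk : Fin m → Matrix (Fin N) (Fin K) ℝ)
    (hNblk : ∀ i : Fin m, Nblk i = ∑ j : Fin s, M ⟨i.1 * s + j.1, by
      have h1 : i.1 * s + j.1 < (i.1 + 1) * s := by
        have := j.2
        have : (i.1 + 1) * s = i.1 * s + s := by ring
        omega
      have h2 : (i.1 + 1) * s ≤ m * s := Nat.mul_le_mul i.2 le_rfl
      omega⟩)
    (B : Matrix (Fin N) (Fin P) ℝ) (hB : B = (∑ i, M i) * Xstar)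
    (X : ℤ → Matrix (Fin K) (Fin P) ℝ) (R : ℤ → Matrix (Fin N) (Fin P) ℝ)
    (hR : ∀ t : ℤ, 0 ≤ t →
      R (t + 1) = B - ∑ i : Fin m, Nblk (idx m (by omega) (t - ((i : ℕ) : ℤ))) * X (t - ((i : ℕ) : ℤ)))
    (hXstep : ∀ t : ℤ, 0 ≤ t →
      X (t + 1) = X t + α • ((Nblk (idx m (by omega) t))ᵀ * R (t + 1)))
    (hrate : kappaFSD (show 0 < m by omega) α Nblk + α * muFSD hm Nblk * ((m : ℝ) - 1) < 1) :
    Filter.Tendsto (fun t : ℕ => frobNorm (X (t : ℤ) - Xstar)) Filter.atTop (nhds 0) := by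
  have hm0 : 0 < m := by omega
  have hblocks : ∑ i, Nblk i = ∑ k, M k := by
    rw [← Equiv.sum_comp finProdFinEquiv, Fintype.sum_prod_type]
    refine sum_congr rfl fun i _ => (hNblk i).trans (sum_congr rfl fun j _ => congrArg M ?_)
    ext
    simp [finProdFinEquiv, add_comm, mul_comm]
  have hrate0 : 0 ≤ kappaFSD hm0 α Nblk + α * muFSD hm Nblk * ((m : ℝ) - 1) := by
    have hκ := (norm_nonneg _).trans (specNorm_le_kappaFSD hm0 α Nblk ⟨0, hm0⟩)
    have hμ := (norm_nonneg _).trans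
      (specNorm_le_muFSD hm Nblk (i := ⟨0, hm0⟩) (j := ⟨1, hm⟩) (by simp))
    have hm1 : (1 : ℝ) ≤ m := by exact_mod_cast hm0
    exact add_nonneg hκ (mul_nonneg (mul_nonneg hα.le hμ) (by linarith))
  have hlim := tendsto_zero_of_le_mul_window (e := fun t => ‖X t - Xstar‖) hm0 hrate0 hrate
    (fun t => norm_nonneg _) fun t ht c hc =>
      fsd_error_le_window hm hα.le (hB.trans (by rw [hblocks])) hR hXstep ht hc
  simpa only [frobNorm_eq_norm] using hlim
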